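/- For every finite word ω = (ω_1,…,ω_m) over the alphabet I and all z, w in the closed unit disk 𝔻, |φ'_ω(z)| ≤ 5.900319·|φ'_ω(w)|, where φ_ω = φ_{ω_1}∘⋯∘φ_{ω_m}. -/

import Mathlib

open Complex Metric Set
open scoped ENNReal

noncomputable section

/-- λ = √3 -/
def lam : ℝ := Real.sqrt 3

/-- The Möbius map f(z) = ((λ−1)z+1)/(−z+λ+1). -/
def apolF : ℂ → ℂ := fun z => (((lam : ℂ) - 1) * z + 1) / (-z + (lam : ℂ) + 1)

/-- Rotation by angle θ. -/
def Rot (θ : ℝ) : ℂ → ℂ := fun z => Complex.exp ((θ : ℂ) * Complex.I) * z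

/-- θ_k = (−1)^k · 2π/3 -/
def thetaA (k : ℕ) : ℝ := (-1 : ℝ) ^ k * (2 * Real.pi / 3)

/-- θ'_k = 2πk/3 -/
def thetaB (k : ℕ) : ℝ := 2 * Real.pi * k / 3

/-- The Apollonian generators φ_{k,n} = R_{θ'_k} ∘ f^n ∘ R_{θ_k} ∘ f. -/
def phi (k n : ℕ) : ℂ → ℂ := Rot (thetaB k) ∘ (apolF^[n]) ∘ Rot (thetaA k) ∘ apolF

/-- The closed unit disk 𝔻. -/
def unitD : Set ℂ := Metric.closedBall (0 : ℂ) 1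

/-- The Apollonian alphabet I = {1,…,6} × {1,2,3,…}. -/
def apolI : Set (ℕ × ℕ) := {p | 1 ≤ p.1 ∧ p.1 ≤ 6 ∧ 1 ≤ p.2}

/-- Composition φ_{ω₁}∘⋯∘φ_{ω_m} of a finite word ω = (ω₁,…,ω_m). -/
def wordComp (ω : List (ℕ × ℕ)) : ℂ → ℂ :=
  ω.foldr (fun p g => phi p.1 p.2 ∘ g) id

/-! Every generator `φ_{k,n}` is a Möbius map sending the disk `B = {|z| ≤ 12/5}` into itself:
`f` maps `B` into a disk around `4.08`, the rotation by `θ_k` moves this disk to one that `f` maps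
into a small disk near `1`, from which all further iterates of `f` stay inside `B`, and the final
rotation preserves `B`; for odd `k` the picture is the complex conjugate of the one for even `k`.
Hence every `φ_ω` is a Möbius map `(az + b)/(cz + d)` whose pole lies outside `B`, and on `𝔻` the
ratio `|φ_ω'(z)| / |φ_ω'(w)| = |cw + d|² / |cz + d|²` is at most
`((12/5 + 1)/(12/5 - 1))² = (17/7)² < 5.900319`. -/

open ComplexConjugate

/-- Degenerate coefficients, `a * d = b * c`, are allowed. -/
def IsMobiusOn (g : ℂ → ℂ) (T : Set ℂ) : Prop :=
  ∃ a b c d : ℂ, ∀ z ∈ T, c * z + d ≠ 0 ∧ g z = (a * z + b) / (c * z + d)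

namespace IsMobiusOn

variable {g h : ℂ → ℂ} {T U : Set ℂ}

protected lemma id (T : Set ℂ) : IsMobiusOn id T :=
  ⟨1, 0, 0, 1, fun z _ => by simp⟩

lemma const_mul (ζ : ℂ) (T : Set ℂ) : IsMobiusOn (fun z => ζ * z) T :=
  ⟨ζ, 0, 0, 1, fun z _ => by simp⟩

lemma comp (hh : IsMobiusOn h U) (hg : IsMobiusOn g T) (hgT : MapsTo g T U) :
    IsMobiusOn (h ∘ g) T := by
  obtain ⟨a, b, c, d, hg⟩ := hg
  obtain ⟨a', b', c', d', hh⟩ := hh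
  refine ⟨a' * a + b' * c, a' * b + b' * d, c' * a + d' * c, c' * b + d' * d, fun z hz => ?_⟩
  obtain ⟨hden, hgz⟩ := hg z hz
  obtain ⟨hden', hhz⟩ := hh (g z) (hgT hz)
  have hprod : (c' * a + d' * c) * z + (c' * b + d' * d) = (c' * g z + d') * (c * z + d) := by
    rw [hgz]; field_simp; ring
  refine ⟨hprod ▸ mul_ne_zero hden' hden, ?_⟩
  rw [Function.comp_apply, hhz, hprod, mul_comm (c' * g z + d'), ← div_div, div_left_inj' hden',
    eq_div_iff hden, hgz, add_mul, mul_assoc, div_mul_cancel₀ _ hden]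
  ring

lemma iterate (hg : IsMobiusOn g T) (hgT : MapsTo g T T) : ∀ n, IsMobiusOn g^[n] T
  | 0 => IsMobiusOn.id T
  | n + 1 => by
    rw [Function.iterate_succ]
    exact (hg.iterate hgT n).comp hg hgT

end IsMobiusOn

lemma deriv_mobius {a b c d z : ℂ} (h : c * z + d ≠ 0) :
    deriv (fun w => (a * w + b) / (c * w + d)) z = (a * d - b * c) / (c * z + d) ^ 2 := by
  have hnum : HasDerivAt (fun w : ℂ => a * w + b) a z := by
    simpa using ((hasDerivAt_id z).const_mul a).add_const b
  have hden : HasDerivAt (fun w : ℂ => c * w + d) c z := by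
    simpa using ((hasDerivAt_id z).const_mul c).add_const d
  exact (hnum.div hden h).deriv.trans (by ring)

lemma norm_linear_le_of_ne_zero_on_closedBall {c d z w : ℂ} {R ρ : ℝ}
    (hcd : ∀ u ∈ closedBall (0 : ℂ) R, c * u + d ≠ 0) (hρR : ρ < R) (hz : ‖z‖ ≤ ρ)
    (hw : ‖w‖ ≤ ρ) : (R - ρ) * ‖c * w + d‖ ≤ (R + ρ) * ‖c * z + d‖ := by
  have hρ : 0 ≤ ρ := (norm_nonneg z).trans hz
  rcases eq_or_ne c 0 with rfl | hc
  · simp only [zero_mul, zero_add]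
    gcongr; linarith
  set p := -d / c
  have hfac : ∀ u, c * u + d = c * (u - p) := fun u => by simp only [p]; field_simp; ring
  have hpR : R < ‖p‖ := by
    by_contra! hp
    exact hcd p (by simpa using hp) (by rw [hfac, sub_self, mul_zero])
  have hw' : ‖w - p‖ ≤ ‖p‖ + ρ := by linarith [norm_sub_le w p]
  have hz' : ‖p‖ - ρ ≤ ‖z - p‖ := by linarith [norm_sub_norm_le p z, norm_sub_rev p z]
  rw [hfac, hfac, norm_mul, norm_mul]
  have hc' := norm_nonneg c
  calc (R - ρ) * (‖c‖ * ‖w - p‖) ≤ (R - ρ) * (‖c‖ * (‖p‖ + ρ)) := by gcongr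
    _ ≤ (R + ρ) * (‖c‖ * (‖p‖ - ρ)) := by nlinarith [mul_nonneg hc' hρ]
    _ ≤ (R + ρ) * (‖c‖ * ‖z - p‖) := by gcongr; linarith

lemma IsMobiusOn.norm_deriv_le {g : ℂ → ℂ} {R ρ : ℝ} (hg : IsMobiusOn g (closedBall 0 R))
    (hρR : ρ < R) {z w : ℂ} (hz : ‖z‖ ≤ ρ) (hw : ‖w‖ ≤ ρ) :
    ‖deriv g z‖ ≤ ((R + ρ) / (R - ρ)) ^ 2 * ‖deriv g w‖ := by
  obtain ⟨a, b, c, d, hg⟩ := hg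
  have hderiv : ∀ u : ℂ, ‖u‖ ≤ ρ → deriv g u = (a * d - b * c) / (c * u + d) ^ 2 := by
    intro u hu
    have hball : ball (0 : ℂ) R ∈ nhds u :=
      isOpen_ball.mem_nhds (mem_ball_zero_iff.mpr (hu.trans_lt hρR))
    rw [(Filter.eventuallyEq_of_mem hball fun v hv =>
      (hg v (ball_subset_closedBall hv)).2).deriv_eq]
    exact deriv_mobius (hg u (by simpa using hu.trans hρR.le)).1
  have hden : ∀ u : ℂ, ‖u‖ ≤ ρ → 0 < ‖c * u + d‖ := fun u hu =>
    norm_pos_iff.mpr (hg u (by simpa using hu.trans hρR.le)).1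
  have hratio := norm_linear_le_of_ne_zero_on_closedBall (fun u hu => (hg u hu).1) hρR hz hw
  have hq : ‖c * w + d‖ / ‖c * z + d‖ ≤ (R + ρ) / (R - ρ) := by
    rw [div_le_div_iff₀ (hden z hz) (by linarith)]
    linarith
  rw [hderiv z hz, hderiv w hw, norm_div, norm_div, norm_pow, norm_pow]
  calc ‖a * d - b * c‖ / ‖c * z + d‖ ^ 2
      = (‖c * w + d‖ / ‖c * z + d‖) ^ 2 * (‖a * d - b * c‖ / ‖c * w + d‖ ^ 2) := by
        field_simp [(hden z hz).ne', (hden w hw).ne']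
    _ ≤ ((R + ρ) / (R - ρ)) ^ 2 * (‖a * d - b * c‖ / ‖c * w + d‖ ^ 2) := by
        gcongr

lemma lam_sq : lam ^ 2 = 3 := Real.sq_sqrt (by norm_num)

lemma lam_nonneg : 0 ≤ lam := Real.sqrt_nonneg 3

lemma lam_gt : 1.7320508 < lam := by
  rw [lam, Real.lt_sqrt (by norm_num)]; norm_num

lemma lam_lt : lam < 1.7320509 := by
  rw [lam, Real.sqrt_lt' (by norm_num)]; norm_num

lemma mem_closedBall_iff_re_im {z c : ℂ} {r : ℝ} (hr : 0 ≤ r) :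
    z ∈ closedBall c r ↔ (z.re - c.re) ^ 2 + (z.im - c.im) ^ 2 ≤ r ^ 2 := by
  rw [mem_closedBall, dist_eq_re_im, Real.sqrt_le_left hr]

lemma re_lt_of_mem_closedBall {z c : ℂ} {r t : ℝ} (hz : z ∈ closedBall c r) (h : c.re + r < t) :
    z.re < t := by
  have := (abs_re_le_norm (z - c)).trans (mem_closedBall_iff_norm.mp hz)
  rw [sub_re] at this
  linarith [le_abs_self (z.re - c.re)]

lemma isMobiusOn_apolF {T : Set ℂ} (hT : ∀ z ∈ T, z.re < lam + 1) : IsMobiusOn apolF T := by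
  refine ⟨lam - 1, 1, -1, lam + 1, fun z hz => ⟨fun h => ?_, by simp only [apolF]; ring⟩⟩
  have := congrArg Complex.re h
  simp only [neg_mul, one_mul, add_re, neg_re, ofReal_re, one_re, zero_re] at this
  linarith [hT z hz]

/-- `key` is `|N(z)|² ≤ r'² |D(z)|²` written in coordinates, where `apolF z - c' = N(z) / D(z)`;
since `N(lam + 1) = lam² ≠ 0`, it also keeps the pole `lam + 1` out of `closedBall c r`. -/
lemma mapsTo_apolF_closedBall {c c' : ℂ} {r r' : ℝ} (hr : 0 ≤ r) (hr' : 0 ≤ r')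
    (key : ∀ x y : ℝ, (x - c.re) ^ 2 + (y - c.im) ^ 2 ≤ r ^ 2 →
      ((lam - 1 + c'.re) * x - c'.im * y + 1 - c'.re * (lam + 1)) ^ 2 +
        ((lam - 1 + c'.re) * y + c'.im * x - c'.im * (lam + 1)) ^ 2 ≤
      r' ^ 2 * ((lam + 1 - x) ^ 2 + y ^ 2)) :
    MapsTo apolF (closedBall c r) (closedBall c' r') := by
  intro z hz
  have hkey := key z.re z.im ((mem_closedBall_iff_re_im hr).mp hz)
  have hD : -z + lam + 1 ≠ 0 := by
    intro h
    have hre : z.re = lam + 1 := by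
      have := congrArg Complex.re h
      simp only [add_re, neg_re, ofReal_re, one_re, zero_re] at this
      linarith
    have him : z.im = 0 := by simpa using congrArg Complex.im h
    rw [hre, him] at hkey
    nlinarith [lam_sq]
  have hsub : apolF z - c' = ((lam - 1 + c') * z + (1 - c' * (lam + 1))) / (-z + lam + 1) := by
    rw [eq_div_iff hD, sub_mul, apolF, div_mul_cancel₀ _ hD]
    ring
  rw [mem_closedBall, dist_eq, hsub, norm_div, div_le_iff₀ (norm_pos_iff.mpr hD),
    ← pow_le_pow_iff_left₀ (norm_nonneg _) (by positivity) two_ne_zero, mul_pow,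
    Complex.sq_norm, Complex.sq_norm, normSq_apply, normSq_apply]
  simp only [add_re, mul_re, sub_re, ofReal_re, one_re, add_im, sub_im, ofReal_im, one_im,
    sub_self, zero_add, add_zero, mul_zero, sub_zero, mul_im, zero_sub, neg_re, neg_im, mul_neg,
    neg_mul, neg_neg]
  linarith

def outerDisk : Set ℂ := closedBall 0 (12 / 5)

def rotatedDisk : Set ℂ := closedBall ⟨-2.04, 2.04 * lam⟩ 4.228

def entryDisk : Set ℂ := closedBall ⟨0.092, 0.61⟩ 0.731

def invariantDisk : Set ℂ := closedBall ⟨0.39, 0⟩ 0.61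

/- In each disk inclusion below, the target inequality follows from the disk hypothesis and from
squares `(x - p)²`, `(y - q)²`, each taken with a coefficient affine in `lam`. -/

lemma mapsTo_apolF_outerDisk : MapsTo apolF outerDisk (closedBall ⟨4.08, 0⟩ 4.228) := by
  refine mapsTo_apolF_closedBall (by norm_num) (by norm_num) fun x y h => ?_
  simp only [zero_re, zero_im] at h
  nlinarith [mul_nonneg lam_nonneg (sub_nonneg.mpr h), sq_nonneg (x - 2.4),
    mul_nonneg lam_nonneg (sq_nonneg (x - 2.4)), sq_nonneg y, mul_nonneg lam_nonneg (sq_nonneg y),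
    lam_sq, lam_gt, lam_lt]

lemma mapsTo_apolF_rotatedDisk : MapsTo apolF rotatedDisk entryDisk := by
  refine mapsTo_apolF_closedBall (by norm_num) (by norm_num) fun x y h => ?_
  dsimp only at h ⊢
  nlinarith [mul_nonneg lam_nonneg (sub_nonneg.mpr h), sq_nonneg (x - 1.488),
    mul_nonneg lam_nonneg (sq_nonneg (x - 1.488)), sq_nonneg (y - 1.195),
    mul_nonneg lam_nonneg (sq_nonneg (y - 1.195)), lam_sq, lam_gt, lam_lt]

lemma mapsTo_apolF_entryDisk : MapsTo apolF entryDisk invariantDisk := by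
  refine mapsTo_apolF_closedBall (by norm_num) (by norm_num) fun x y h => ?_
  dsimp only at h ⊢
  nlinarith [mul_nonneg lam_nonneg (sub_nonneg.mpr h), sq_nonneg (x - 0.738),
    mul_nonneg lam_nonneg (sq_nonneg (x - 0.738)), sq_nonneg (y - 0.951),
    mul_nonneg lam_nonneg (sq_nonneg (y - 0.951)), lam_sq, lam_gt, lam_lt]

lemma mapsTo_apolF_invariantDisk : MapsTo apolF invariantDisk invariantDisk := by
  refine mapsTo_apolF_closedBall (by norm_num) (by norm_num) fun x y h => ?_
  dsimp only at h ⊢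
  nlinarith [mul_nonneg lam_nonneg (sub_nonneg.mpr h), sq_nonneg (x - 1),
    mul_nonneg lam_nonneg (sq_nonneg (x - 1)), sq_nonneg y, mul_nonneg lam_nonneg (sq_nonneg y),
    lam_sq]

lemma mapsTo_rot_closedBall (θ : ℝ) (c : ℂ) (r : ℝ) :
    MapsTo (Rot θ) (closedBall c r) (closedBall (exp (θ * I) * c) r) := by
  intro z hz
  rwa [mem_closedBall, dist_eq, Rot, ← mul_sub, norm_mul, norm_exp_ofReal_mul_I, one_mul,
    ← dist_eq]

lemma mapsTo_rot_outerDisk (θ : ℝ) : MapsTo (Rot θ) outerDisk outerDisk := by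
  simpa [outerDisk] using mapsTo_rot_closedBall θ 0 (12 / 5)

lemma exp_two_pi_div_three_mul_I : exp ((2 * Real.pi / 3 : ℝ) * I) = ⟨-1 / 2, lam / 2⟩ := by
  have h : 2 * Real.pi / 3 = Real.pi - Real.pi / 3 := by ring
  apply Complex.ext
  · rw [exp_ofReal_mul_I_re, h, Real.cos_pi_sub, Real.cos_pi_div_three]; norm_num
  · rw [exp_ofReal_mul_I_im, h, Real.sin_pi_sub, Real.sin_pi_div_three, lam]

lemma mapsTo_rot_apolF_outerDisk :
    MapsTo (Rot (2 * Real.pi / 3) ∘ apolF) outerDisk rotatedDisk := by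
  have hcenter : exp ((2 * Real.pi / 3 : ℝ) * I) * ⟨4.08, 0⟩ = ⟨-2.04, 2.04 * lam⟩ := by
    rw [exp_two_pi_div_three_mul_I]
    apply Complex.ext <;> simp only [mul_re, mul_im, mul_zero, sub_zero, zero_add] <;> ring
  have := mapsTo_rot_closedBall (2 * Real.pi / 3) ⟨4.08, 0⟩ 4.228
  rw [hcenter] at this
  exact this.comp mapsTo_apolF_outerDisk

lemma re_lt_of_mem_outerDisk {z : ℂ} (hz : z ∈ outerDisk) : z.re < lam + 1 :=
  re_lt_of_mem_closedBall hz (by rw [zero_re]; linarith [lam_gt])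

lemma re_lt_of_mem_rotatedDisk {z : ℂ} (hz : z ∈ rotatedDisk) : z.re < lam + 1 :=
  re_lt_of_mem_closedBall hz (by dsimp only; linarith [lam_gt])

lemma closedBall_subset_outerDisk {c : ℂ} {r : ℝ} (h : r + |c.re| + |c.im| ≤ 12 / 5) :
    closedBall c r ⊆ outerDisk :=
  closedBall_subset_closedBall' (by rw [dist_zero_right]; linarith [norm_le_abs_re_add_abs_im c])

lemma trap_subset_outerDisk : entryDisk ∪ invariantDisk ⊆ outerDisk :=
  union_subset (closedBall_subset_outerDisk (by norm_num))
    (closedBall_subset_outerDisk (by norm_num))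

lemma mapsTo_apolF_trap : MapsTo apolF (entryDisk ∪ invariantDisk) (entryDisk ∪ invariantDisk) :=
  (mapsTo_apolF_entryDisk.union mapsTo_apolF_invariantDisk).mono_right (by simp)

lemma conj_apolF (z : ℂ) : conj (apolF z) = apolF (conj z) := by
  simp [apolF, map_div₀]

lemma conj_rot (θ : ℝ) (z : ℂ) : conj (Rot θ z) = Rot (-θ) (conj z) := by
  simp [Rot, ← exp_conj]

lemma mapsTo_preimage_conj {g g' : ℂ → ℂ} {S T : Set ℂ} (hg : ∀ z, conj (g z) = g' (conj z))
    (h : MapsTo g' S T) : MapsTo g (conj ⁻¹' S) (conj ⁻¹' T) := fun z hz => by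
  rw [mem_preimage, hg]
  exact h hz

lemma conj_preimage_outerDisk : conj ⁻¹' outerDisk = outerDisk := by
  ext z
  simp [outerDisk]

lemma isMobiusOn_mapsTo_generator {θ : ℝ} {S Y : Set ℂ}
    (hS : MapsTo (Rot θ ∘ apolF) outerDisk S) (hSre : ∀ z ∈ S, z.re < lam + 1)
    (hSY : MapsTo apolF S Y) (hY : MapsTo apolF Y Y) (hYB : Y ⊆ outerDisk) (θ' : ℝ) {n : ℕ}
    (hn : 1 ≤ n) :
    IsMobiusOn (Rot θ' ∘ apolF^[n] ∘ Rot θ ∘ apolF) outerDisk ∧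
      MapsTo (Rot θ' ∘ apolF^[n] ∘ Rot θ ∘ apolF) outerDisk outerDisk := by
  obtain ⟨m, rfl⟩ := Nat.exists_eq_add_of_le' hn
  have hYre : ∀ z ∈ Y, z.re < lam + 1 := fun z hz => re_lt_of_mem_outerDisk (hYB hz)
  have hrot : ∀ φ : ℝ, IsMobiusOn (Rot φ) univ := fun φ => IsMobiusOn.const_mul _ univ
  have hhead : IsMobiusOn (apolF ∘ Rot θ ∘ apolF) outerDisk :=
    (isMobiusOn_apolF hSre).comp
      ((hrot θ).comp (isMobiusOn_apolF fun _ => re_lt_of_mem_outerDisk) (mapsTo_univ _ _)) hS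
  have hmaps : MapsTo (apolF^[m] ∘ apolF ∘ Rot θ ∘ apolF) outerDisk Y :=
    (hY.iterate m).comp (hSY.comp hS)
  rw [Function.iterate_succ]
  exact ⟨(hrot θ').comp (((isMobiusOn_apolF hYre).iterate hY m).comp hhead (hSY.comp hS))
    (mapsTo_univ _ _), (mapsTo_rot_outerDisk θ').comp (hmaps.mono_right hYB)⟩

lemma phi_isMobiusOn_mapsTo (k : ℕ) {n : ℕ} (hn : 1 ≤ n) :
    IsMobiusOn (phi k n) outerDisk ∧ MapsTo (phi k n) outerDisk outerDisk := by
  have hentry : MapsTo apolF rotatedDisk (entryDisk ∪ invariantDisk) :=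
    mapsTo_apolF_rotatedDisk.mono_right subset_union_left
  rcases Nat.even_or_odd k with hk | hk
  · have hθ : thetaA k = 2 * Real.pi / 3 := by rw [thetaA, hk.neg_one_pow, one_mul]
    rw [phi, hθ]
    exact isMobiusOn_mapsTo_generator mapsTo_rot_apolF_outerDisk
      (fun _ => re_lt_of_mem_rotatedDisk) hentry mapsTo_apolF_trap trap_subset_outerDisk _ hn
  -- `apolF` has real coefficients, so conjugation turns the chain of disks for even `k` into one
  -- for odd `k`.
  · have hθ : thetaA k = -(2 * Real.pi / 3) := by rw [thetaA, hk.neg_one_pow, neg_one_mul]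
    rw [phi, hθ]
    refine isMobiusOn_mapsTo_generator ?_ (fun z hz => by simpa using re_lt_of_mem_rotatedDisk hz)
      (mapsTo_preimage_conj conj_apolF hentry) (mapsTo_preimage_conj conj_apolF mapsTo_apolF_trap)
      ?_ _ hn
    · rw [← conj_preimage_outerDisk]
      exact mapsTo_preimage_conj (fun z => by simp [conj_rot, conj_apolF])
        mapsTo_rot_apolF_outerDisk
    · rw [← conj_preimage_outerDisk]
      exact preimage_mono trap_subset_outerDisk

lemma wordComp_isMobiusOn_mapsTo {ω : List (ℕ × ℕ)} (hω : ∀ p ∈ ω, p ∈ apolI) :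
    IsMobiusOn (wordComp ω) outerDisk ∧ MapsTo (wordComp ω) outerDisk outerDisk := by
  induction ω with
  | nil => exact ⟨IsMobiusOn.id _, mapsTo_id _⟩
  | cons p ω ih =>
    obtain ⟨hmob, hmaps⟩ := ih fun q hq => hω q (List.mem_cons_of_mem p hq)
    obtain ⟨hpmob, hpmaps⟩ := phi_isMobiusOn_mapsTo p.1 (hω p List.mem_cons_self).2.2
    exact ⟨hpmob.comp hmob hmaps, hpmaps.comp hmaps⟩

/-- For every finite word ω over I and z, w ∈ 𝔻, |φ'_ω(z)| ≤ 5.900319 · |φ'_ω(w)|. -/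
theorem apollonian_distortion_bound (ω : List (ℕ × ℕ)) (hω : ∀ p ∈ ω, p ∈ apolI)
    (z w : ℂ) (hz : z ∈ unitD) (hw : w ∈ unitD) :
    ‖deriv (wordComp ω) z‖ ≤ 5.900319 * ‖deriv (wordComp ω) w‖ := by
  calc ‖deriv (wordComp ω) z‖ ≤ ((12 / 5 + 1) / (12 / 5 - 1)) ^ 2 * ‖deriv (wordComp ω) w‖ :=
        (wordComp_isMobiusOn_mapsTo hω).1.norm_deriv_le (by norm_num)
          (mem_closedBall_zero_iff.mp hz) (mem_closedBall_zero_iff.mp hw)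
    _ ≤ 5.900319 * ‖deriv (wordComp ω) w‖ := by gcongr; norm_num

end
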